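/- Let f, g : ℕ → ℕ with 1 ≤ g(k) < f(k) for all k, and suppose liminf_{k→∞} g(k) < ∞, i.e. g is bounded on some infinite set. Then 𝔠(f,g) = 2^{ℵ₀}, the cardinality of the continuum. -/

import Mathlib

/-- `B` is a `g`-slalom: a sequence of finite sets of naturals with `|B k| = g k`. -/
def IsSlalom (g : ℕ → ℕ) (B : ℕ → Finset ℕ) : Prop := ∀ k, (B k).card = g k

/-- `x` is covered by the slalom `B`. -/
def Covers (B : ℕ → Finset ℕ) (x : ℕ → ℕ) : Prop := ∀ k, x k ∈ B k

/-- `slalomCov f g` is the least cardinality of a family of `g`-slaloms covering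
every `x : ℕ → ℕ` with `x k < f k` for all `k`. -/
noncomputable def slalomCov (f g : ℕ → ℕ) : Cardinal :=
  sInf { c : Cardinal | ∃ 𝓑 : Set (ℕ → Finset ℕ),
    (∀ B ∈ 𝓑, IsSlalom g B) ∧
    (∀ x : ℕ → ℕ, (∀ k, x k < f k) → ∃ B ∈ 𝓑, Covers B x) ∧
    c = Cardinal.mk 𝓑 }

/-!
The family of all `g`-slaloms covers everything and has size at most `𝔠`. For the lower bound,
pigeonhole gives `c ≥ 1` with `g k = c` for infinitely many `k`; spend those coordinates on the
codes `(n, σ)`, where `σ` colours the strings of length `n` with `c + 1` colours, and send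
`r : ℕ → Fin (c + 1)` to the function whose value at the coordinate of `(n, σ)` is
`σ (r ↾ n)`. Any `c + 1` distinct `r` are separated below some `n`, and a suitable `σ` gives them
`c + 1` distinct values at one coordinate, so a slalom covers the images of at most `c` of the
`𝔠` sequences `r`. Hence a covering family has at least `𝔠` members.
-/

open Cardinal Function

lemma exists_infinite_setOf_eq_of_infinite_setOf_le {α : Type*} {g : α → ℕ} {C : ℕ}
    (h : {k | g k ≤ C}.Infinite) : ∃ c, {k | g k = c}.Infinite := by
  by_contra! hfin
  exact h <| ((Set.finite_Iic C).biUnion fun c _ => hfin c).subset fun k hk =>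
    Set.mem_biUnion hk rfl

lemma mk_nat_arrow_finset_nat : #(ℕ → Finset ℕ) = 𝔠 := by
  rw [← power_def, mk_finset_of_infinite, mk_nat, aleph0_power_aleph0]

lemma mk_nat_arrow_fin {c : ℕ} (hc : 0 < c) : #(ℕ → Fin (c + 1)) = 𝔠 := by
  rw [← power_def, mk_fin, mk_nat, nat_power_eq le_rfl (by omega), two_power_aleph0]

lemma exists_injective_restrict_fin {ι α : Type*} [Finite ι] {r : ι → ℕ → α}
    (hr : Injective r) : ∃ n, Injective fun i (m : Fin n) => r i m := by
  have hsep (q : {q : ι × ι // q.1 ≠ q.2}) : ∃ m, r q.1.1 m ≠ r q.1.2 m :=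
    ne_iff.mp (hr.ne q.2)
  choose m hm using hsep
  obtain ⟨N, hN⟩ := (Set.finite_range m).bddAbove
  refine ⟨N + 1, fun i j hij => by_contra fun hne => hm ⟨(i, j), hne⟩ ?_⟩
  exact congrFun hij ⟨m _, Nat.lt_succ_of_le (hN ⟨_, rfl⟩)⟩

abbrev PrefixColouring (α : Type*) := (n : ℕ) × ((Fin n → α) → α)

namespace PrefixColouring

variable {α : Type*}

def eval (p : PrefixColouring α) (r : ℕ → α) : α := p.2 fun m => r m

lemma exists_eval_eq [Inhabited α] {ι : Type*} [Finite ι] {r : ι → ℕ → α} (hr : Injective r)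
    (v : ι → α) : ∃ p : PrefixColouring α, ∀ i, p.eval (r i) = v i := by
  obtain ⟨n, hn⟩ := exists_injective_restrict_fin hr
  exact ⟨⟨n, extend (fun i (m : Fin n) => r i m) v default⟩, fun i => hn.extend_apply _ _ _⟩

lemma mk_setOf_forall_eval_mem_le {c : ℕ} (S : PrefixColouring (Fin (c + 1)) → Finset ℕ)
    (hS : ∀ p, (S p).card ≤ c) :
    #{r : ℕ → Fin (c + 1) | ∀ p, (p.eval r : ℕ) ∈ S p} ≤ c := by
  by_contra! hlt
  obtain ⟨r⟩ : Nonempty (Fin (c + 1) ↪ {r : ℕ → Fin (c + 1) | ∀ p, (p.eval r : ℕ) ∈ S p}) := by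
    rw [← le_def, mk_fin, Nat.cast_succ, ← succ_natCast]
    exact Order.succ_le_of_lt hlt
  obtain ⟨p, hp⟩ :=
    exists_eval_eq (r := fun i => (r i).1) (Subtype.val_injective.comp r.injective) id
  have hcard : (Finset.univ : Finset (Fin (c + 1))).card ≤ (S p).card :=
    Finset.card_le_card_of_injOn (fun i => (i : ℕ))
      (fun i _ => by simpa only [hp i, id, Finset.mem_coe] using (r i).2 p)
      Fin.val_injective.injOn
  simp only [Finset.card_univ, Fintype.card_fin] at hcard
  have := hS p
  omega

end PrefixColouring

def IsSlalomCover (f g : ℕ → ℕ) (𝓑 : Set (ℕ → Finset ℕ)) : Prop :=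
  (∀ B ∈ 𝓑, IsSlalom g B) ∧ ∀ x : ℕ → ℕ, (∀ k, x k < f k) → ∃ B ∈ 𝓑, Covers B x

section IsSlalomCover

variable {f g : ℕ → ℕ}

lemma slalomCov_le {𝓑 : Set (ℕ → Finset ℕ)} (h : IsSlalomCover f g 𝓑) : slalomCov f g ≤ #𝓑 :=
  csInf_le (OrderBot.bddBelow _) ⟨𝓑, h.1, h.2, rfl⟩

lemma le_slalomCov {κ : Cardinal} (hne : ∃ 𝓑, IsSlalomCover f g 𝓑)
    (h : ∀ 𝓑, IsSlalomCover f g 𝓑 → κ ≤ #𝓑) : κ ≤ slalomCov f g := by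
  obtain ⟨𝓑, h𝓑⟩ := hne
  refine le_csInf ⟨_, 𝓑, h𝓑.1, h𝓑.2, rfl⟩ ?_
  rintro _ ⟨𝓑', h₁, h₂, rfl⟩
  exact h 𝓑' ⟨h₁, h₂⟩

lemma isSlalomCover_setOf_isSlalom (hg : ∀ k, 1 ≤ g k) :
    IsSlalomCover f g {B | IsSlalom g B} := by
  refine ⟨fun B hB => hB, fun x _ => ?_⟩
  choose B hxB hB using fun k => Infinite.exists_superset_card_eq {x k} (g k) (hg k)
  exact ⟨B, hB, fun k => hxB k (Finset.mem_singleton_self _)⟩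

lemma slalomCov_le_continuum (hg : ∀ k, 1 ≤ g k) : slalomCov f g ≤ 𝔠 :=
  (slalomCov_le (isSlalomCover_setOf_isSlalom hg)).trans
    ((mk_set_le _).trans mk_nat_arrow_finset_nat.le)

lemma IsSlalomCover.continuum_le_mk {𝓑 : Set (ℕ → Finset ℕ)} (h𝓑 : IsSlalomCover f g 𝓑)
    (hgf : ∀ k, g k < f k) {c : ℕ} (hc : 0 < c) (hT : {k | g k = c}.Infinite) : 𝔠 ≤ #𝓑 := by
  obtain ⟨e₀, he₀⟩ := exists_injective_nat (PrefixColouring (Fin (c + 1)))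
  let ι := hT.natEmbedding _
  let e (p : PrefixColouring (Fin (c + 1))) : ℕ := ι (e₀ p)
  have he : Injective e := fun p q h => he₀ (ι.injective (Subtype.ext h))
  have hge (p) : g (e p) = c := (ι (e₀ p)).2
  let x (r : ℕ → Fin (c + 1)) : ℕ → ℕ := extend e (fun p => (p.eval r : ℕ)) 0
  have hx (r p) : x r (e p) = p.eval r := he.extend_apply _ _ _
  have hx_lt (r k) : x r k < f k := by
    by_cases hk : ∃ p, e p = k
    · obtain ⟨p, rfl⟩ := hk
      rw [hx]
      exact (p.eval r).isLt.trans_le (hge p ▸ hgf (e p))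
    · simpa only [x, extend_apply' _ _ _ hk, Pi.zero_apply] using Nat.zero_lt_of_lt (hgf k)
  have hcover : Set.univ ⊆ ⋃ B : 𝓑, {r | ∀ p, (p.eval r : ℕ) ∈ B.1 (e p)} := fun r _ => by
    obtain ⟨B, hB, hxB⟩ := h𝓑.2 (x r) (hx_lt r)
    exact Set.mem_iUnion.2 ⟨⟨B, hB⟩, fun p => hx r p ▸ hxB (e p)⟩
  have hfiber (B : 𝓑) : #{r | ∀ p, (p.eval r : ℕ) ∈ B.1 (e p)} ≤ c :=
    PrefixColouring.mk_setOf_forall_eval_mem_le _ fun p =>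
      ((h𝓑.1 B B.2 (e p)).trans (hge p)).le
  have hle : 𝔠 ≤ #𝓑 * c := calc
    𝔠 = #(Set.univ : Set (ℕ → Fin (c + 1))) := by rw [mk_univ, mk_nat_arrow_fin hc]
    _ ≤ #(⋃ B : 𝓑, {r | ∀ p, (p.eval r : ℕ) ∈ B.1 (e p)}) := mk_le_mk_of_subset hcover
    _ ≤ #𝓑 * ⨆ B : 𝓑, #{r | ∀ p, (p.eval r : ℕ) ∈ B.1 (e p)} := mk_iUnion_le _
    _ ≤ #𝓑 * c := by gcongr; exact ciSup_le' hfiber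
  by_contra! hlt
  exact (mul_lt_of_lt aleph0_le_continuum hlt (nat_lt_continuum c)).not_ge hle

end IsSlalomCover

theorem slalomCov_liminf (f g : ℕ → ℕ) (hg : ∀ k, 1 ≤ g k) (hgf : ∀ k, g k < f k)
    (hbd : ∃ C : ℕ, {k : ℕ | g k ≤ C}.Infinite) :
    slalomCov f g = Cardinal.continuum := by
  obtain ⟨C, hC⟩ := hbd
  obtain ⟨c, hT⟩ := exists_infinite_setOf_eq_of_infinite_setOf_le hC
  have hc : 0 < c := by
    obtain ⟨k, rfl⟩ := hT.nonempty
    exact hg k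
  exact (slalomCov_le_continuum hg).antisymm <|
    le_slalomCov ⟨_, isSlalomCover_setOf_isSlalom hg⟩ fun _ h𝓑 => h𝓑.continuum_le_mk hgf hc hT
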